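/- Let b ≥ 0 and p > 2 be real numbers, and let V : ℝ² → ℝ be continuously differentiable. Let u : ℝ² → ℝ be continuously differentiable such that the functions x ↦ ‖∇u(x)‖², x ↦ u(x)², x ↦ V(x)u(x)², x ↦ ⟨∇V(x),x⟩u(x)² and x ↦ |u(x)|^p are integrable on ℝ² and (x,y) ↦ |log(‖x−y‖)|·u(x)²u(y)² is integrable on ℝ²×ℝ². If J(u) = 0, then I(u) = ¼∫_{ℝ²}(V(x) + ½⟨∇V(x),x⟩)u(x)² dx + (1/(32π))·(∫_{ℝ²}u(x)²dx)² + (b(p−3)/(2p))·∫_{ℝ²}|u(x)|^p dx. -/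
import Mathlib


open MeasureTheory
open scoped InnerProductSpace

abbrev E2 := EuclideanSpace ℝ (Fin 2)

/-- The energy functional `I` of the planar Schrödinger–Poisson problem. -/
noncomputable def energyI (b p : ℝ) (V u : E2 → ℝ) : ℝ :=
  (1 / 2) * (∫ x : E2, (‖gradient u x‖ ^ 2 + V x * (u x) ^ 2)) +
    (1 / (8 * Real.pi)) *
      (∫ z : E2 × E2, Real.log ‖z.1 - z.2‖ * (u z.1) ^ 2 * (u z.2) ^ 2) -
    (b / p) * (∫ x : E2, |u x| ^ p)

/-- The auxiliary (Nehari–Pohozaev) functional `J`. -/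
noncomputable def energyJ (b p : ℝ) (V u : E2 → ℝ) : ℝ :=
  (∫ x : E2, (2 * ‖gradient u x‖ ^ 2 +
      (V x - (1 / 2) * ⟪gradient V x, x⟫_ℝ) * (u x) ^ 2 -
      (2 * b * (p - 1) / p) * |u x| ^ p)) -
    (1 / (8 * Real.pi)) * (∫ x : E2, (u x) ^ 2) ^ 2 +
    (1 / (2 * Real.pi)) *
      (∫ z : E2 × E2, Real.log ‖z.1 - z.2‖ * (u z.1) ^ 2 * (u z.2) ^ 2)

/-- The Nehari–Pohozaev energy identity (5.3): if `J(u) = 0`, then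
`I(u) = ¼∫(V + ½⟨∇V,x⟩)u² + (1/32π)(∫u²)² + (b(p−3)/2p)∫|u|ᵖ`. -/
theorem stmt13 (b p : ℝ) (hb : 0 ≤ b) (hp : 2 < p)
    (V : E2 → ℝ) (hV : ContDiff ℝ 1 V)
    (u : E2 → ℝ) (hu : ContDiff ℝ 1 u)
    (hint1 : Integrable (fun x : E2 => ‖gradient u x‖ ^ 2))
    (hint2 : Integrable (fun x : E2 => (u x) ^ 2))
    (hint3 : Integrable (fun x : E2 => V x * (u x) ^ 2))
    (hint4 : Integrable (fun x : E2 => ⟪gradient V x, x⟫_ℝ * (u x) ^ 2))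
    (hint5 : Integrable (fun x : E2 => |u x| ^ p))
    (hint6 : Integrable
      (fun z : E2 × E2 => |Real.log ‖z.1 - z.2‖| * (u z.1) ^ 2 * (u z.2) ^ 2))
    (hJ : energyJ b p V u = 0) :
    energyI b p V u =
      (1 / 4) * (∫ x : E2, (V x + (1 / 2) * ⟪gradient V x, x⟫_ℝ) * (u x) ^ 2) +
        (1 / (32 * Real.pi)) * (∫ x : E2, (u x) ^ 2) ^ 2 +
        (b * (p - 3) / (2 * p)) * (∫ x : E2, |u x| ^ p) := by
  have h1 : (∫ x : E2, (‖gradient u x‖ ^ 2 + V x * (u x) ^ 2)) =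
      (∫ x : E2, ‖gradient u x‖ ^ 2) + ∫ x : E2, V x * (u x) ^ 2 :=
    integral_add hint1 hint3
  have h2 : (∫ x : E2, (2 * ‖gradient u x‖ ^ 2 +
      (V x - (1 / 2) * ⟪gradient V x, x⟫_ℝ) * (u x) ^ 2 -
      (2 * b * (p - 1) / p) * |u x| ^ p)) =
      (2 * ∫ x : E2, ‖gradient u x‖ ^ 2) +
        ((∫ x : E2, V x * (u x) ^ 2) -
          (1 / 2) * ∫ x : E2, ⟪gradient V x, x⟫_ℝ * (u x) ^ 2) -
        (2 * b * (p - 1) / p) * ∫ x : E2, |u x| ^ p := by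
    have e : ∀ x : E2, (2 * ‖gradient u x‖ ^ 2 +
        (V x - (1 / 2) * ⟪gradient V x, x⟫_ℝ) * (u x) ^ 2 -
        (2 * b * (p - 1) / p) * |u x| ^ p) =
        2 * ‖gradient u x‖ ^ 2 +
          (V x * (u x) ^ 2 - (1 / 2) * (⟪gradient V x, x⟫_ℝ * (u x) ^ 2)) -
          (2 * b * (p - 1) / p) * |u x| ^ p := fun x => by ring
    simp_rw [e]
    have i4 : Integrable (fun x : E2 => (1 / 2) * (⟪gradient V x, x⟫_ℝ * (u x) ^ 2)) :=
      hint4.const_mul _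
    have i3 : Integrable (fun x : E2 =>
        V x * (u x) ^ 2 - (1 / 2) * (⟪gradient V x, x⟫_ℝ * (u x) ^ 2)) := hint3.sub i4
    have i1 : Integrable (fun x : E2 => 2 * ‖gradient u x‖ ^ 2) := hint1.const_mul 2
    have i13 : Integrable (fun x : E2 => 2 * ‖gradient u x‖ ^ 2 +
        (V x * (u x) ^ 2 - (1 / 2) * (⟪gradient V x, x⟫_ℝ * (u x) ^ 2))) := i1.add i3
    have i5 : Integrable (fun x : E2 => (2 * b * (p - 1) / p) * |u x| ^ p) :=
      hint5.const_mul _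
    rw [integral_sub i13 i5, integral_add i1 i3, integral_sub hint3 i4,
      integral_const_mul, integral_const_mul, integral_const_mul]
  have h3 : (∫ x : E2, (V x + (1 / 2) * ⟪gradient V x, x⟫_ℝ) * (u x) ^ 2) =
      (∫ x : E2, V x * (u x) ^ 2) +
        (1 / 2) * ∫ x : E2, ⟪gradient V x, x⟫_ℝ * (u x) ^ 2 := by
    have e : ∀ x : E2, (V x + (1 / 2) * ⟪gradient V x, x⟫_ℝ) * (u x) ^ 2 =
        V x * (u x) ^ 2 + (1 / 2) * (⟪gradient V x, x⟫_ℝ * (u x) ^ 2) :=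
      fun x => by ring
    simp_rw [e]
    have i4 : Integrable (fun x : E2 => (1 / 2) * (⟪gradient V x, x⟫_ℝ * (u x) ^ 2)) :=
      hint4.const_mul _
    rw [integral_add hint3 i4, integral_const_mul]
  unfold energyJ at hJ
  unfold energyI
  rw [h1, h3]
  rw [h2] at hJ
  linear_combination (1 / 4) * hJ
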